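/- Let (G,σ,w) be a positive-connected signed graph with consensus index ε₀, and let 0 < ε < ε₀. If the node ε-repelling curvature satisfies τ_ε(i) ≥ K_ε for all i ∈ V for some constant K_ε > 0, then the second smallest eigenvalue λ₂^(ε) of L_ε satisfies λ₂^(ε) ≥ 2·K_ε/|V(G)|. -/

import Mathlib

open Matrix BigOperators

open scoped Classical

/-- Moore–Penrose pseudoinverse of a square real matrix (chosen via the
defining Penrose equations; it is unique when it exists). -/
noncomputable def pinv {n : ℕ} (A : Matrix (Fin n) (Fin n) ℝ) : Matrix (Fin n) (Fin n) ℝ :=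
  if h : ∃ B : Matrix (Fin n) (Fin n) ℝ,
      A * B * A = A ∧ B * A * B = B ∧ (A * B)ᵀ = A * B ∧ (B * A)ᵀ = B * A
  then h.choose else 0

/-- The eigenvalues of a symmetric real matrix, sorted in nondecreasing order. -/
noncomputable def sortedEigs {n : ℕ} (A : Matrix (Fin n) (Fin n) ℝ) : List ℝ :=
  if h : A.IsHermitian then (Finset.univ.val.map h.eigenvalues).sort (· ≤ ·) else []

/-- The second smallest eigenvalue (with multiplicity) of a symmetric real matrix. -/
noncomputable def secondSmallestEig {n : ℕ} (A : Matrix (Fin n) (Fin n) ℝ) : ℝ :=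
  (sortedEigs A).getD 1 0

/-- The largest eigenvalue of a symmetric real matrix. -/
noncomputable def largestEig {n : ℕ} (A : Matrix (Fin n) (Fin n) ℝ) : ℝ :=
  (sortedEigs A).getD (n - 1) 0

/-- A signed weighted graph on `n` vertices, given by the positive-part and
negative-part weight functions (an edge carries a positive weight and a sign;
`wplus i j > 0` iff `(i,j)` is a positive edge, `wminus i j > 0` iff it is a
negative edge). -/
structure SignedGraph (n : ℕ) where
  wplus : Fin n → Fin n → ℝ
  wminus : Fin n → Fin n → ℝ
  wplus_symm : ∀ i j, wplus i j = wplus j i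
  wminus_symm : ∀ i j, wminus i j = wminus j i
  wplus_nonneg : ∀ i j, 0 ≤ wplus i j
  wminus_nonneg : ∀ i j, 0 ≤ wminus i j
  wplus_diag : ∀ i, wplus i i = 0
  wminus_diag : ∀ i, wminus i i = 0
  disjoint : ∀ i j, wplus i j = 0 ∨ wminus i j = 0

namespace SignedGraph

variable {n : ℕ} (Γ : SignedGraph n)

/-- positive degree -/
noncomputable def dplus (i : Fin n) : ℝ := ∑ j, Γ.wplus i j

/-- negative degree -/
noncomputable def dminus (i : Fin n) : ℝ := ∑ j, Γ.wminus i j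

/-- Laplacian of the positive subgraph -/
noncomputable def Lplus : Matrix (Fin n) (Fin n) ℝ :=
  Matrix.of fun i j => if i = j then Γ.dplus i else -Γ.wplus i j

/-- Laplacian of the negative subgraph -/
noncomputable def Lminus : Matrix (Fin n) (Fin n) ℝ :=
  Matrix.of fun i j => if i = j then Γ.dminus i else -Γ.wminus i j

/-- the ε-repelling Laplacian `L₊ - ε L₋` -/
noncomputable def Leps (ε : ℝ) : Matrix (Fin n) (Fin n) ℝ := Γ.Lplus - ε • Γ.Lminus

/-- the positive subgraph as a simple graph -/
def posGraph : SimpleGraph (Fin n) := SimpleGraph.fromRel (fun i j => 0 < Γ.wplus i j)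

/-- the negative subgraph as a simple graph -/
def negGraph : SimpleGraph (Fin n) := SimpleGraph.fromRel (fun i j => 0 < Γ.wminus i j)

/-- the underlying simple graph -/
def underlying : SimpleGraph (Fin n) :=
  SimpleGraph.fromRel (fun i j => 0 < Γ.wplus i j + Γ.wminus i j)

/-- the signed graph is positive-connected -/
def PosConnected : Prop := Γ.posGraph.Connected

/-- the signed graph is negative-connected -/
def NegConnected : Prop := Γ.negGraph.Connected

/-- the consensus index ε₀ -/
noncomputable def consensusIndex : ℝ :=
  sSup {ε : ℝ | 0 < ε ∧ (Γ.Leps ε).PosSemidef ∧ (Γ.Leps ε).rank = n - 1}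

/-- the ε-repelling cost Ω_ε(i,j) = (e_i - e_j)ᵀ L_ε† (e_i - e_j) -/
noncomputable def cost (ε : ℝ) (i j : Fin n) : ℝ :=
  (Pi.single i 1 - Pi.single j 1) ⬝ᵥ (pinv (Γ.Leps ε)) *ᵥ (Pi.single i 1 - Pi.single j 1)

/-- the ε-repelling matrix Ω_ε -/
noncomputable def costMatrix (ε : ℝ) : Matrix (Fin n) (Fin n) ℝ :=
  Matrix.of fun i j => Γ.cost ε i j

/-- the node ε-repelling curvature, the unique solution of Ω_ε τ_ε = n·1 -/
noncomputable def tau (ε : ℝ) : Fin n → ℝ :=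
  (Γ.costMatrix ε)⁻¹ *ᵥ (fun _ => (n : ℝ))

/-- φ_ε = n · 1ᵀ Ω_ε⁻¹ 1 -/
noncomputable def phi (ε : ℝ) : ℝ :=
  (n : ℝ) * ((fun _ => (1 : ℝ)) ⬝ᵥ ((Γ.costMatrix ε)⁻¹ *ᵥ fun _ => (1 : ℝ)))

/-- the quantity Λ_ε(i,j) appearing in the edge ε-repelling curvature -/
noncomputable def Lam (ε : ℝ) (i j : Fin n) : ℝ :=
  (Γ.dminus i + Γ.dminus j)
    - (∑ k, Γ.cost ε j k * Γ.wminus i k + ∑ k, Γ.cost ε i k * Γ.wminus j k) / Γ.cost ε i j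

/-- the edge ε-repelling curvature ϑ_ε(i,j) -/
noncomputable def edgeCurv (ε : ℝ) (i j : Fin n) : ℝ :=
  2 * (Γ.tau ε i + Γ.tau ε j) / Γ.cost ε i j + (1 + ε) * Γ.Lam ε i j

end SignedGraph

/-!
Choose `ε' > ε` with `L_ε'` positive semidefinite of rank `n - 1`. Then
`L_ε = L_ε' + (ε' - ε) L₋ ≥ L_ε' ≥ 0`, so `ker L_ε ⊆ ker L_ε' = ℝ·1`: the second smallest
eigenvalue `λ₂` of `L_ε` is positive and a unit eigenvector `ψ` for it is orthogonal to `1`.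
Expanding `L_ε†` in an eigenbasis gives `Ω_ε(i,j) ≥ (ψ_i - ψ_j)² / λ₂`. Summing
`∑_j Ω_ε(i,j) τ_ε(j) = n` over `i` and using `τ_ε ≥ K` then yields
`n² ≥ (K / λ₂) ∑_{i,j} (ψ_i - ψ_j)² = 2nK / λ₂`.
-/

namespace Matrix

variable {n : ℕ}

def IsMoorePenroseInverse (A B : Matrix (Fin n) (Fin n) ℝ) : Prop :=
  A * B * A = A ∧ B * A * B = B ∧ (A * B)ᵀ = A * B ∧ (B * A)ᵀ = B * A

theorem IsMoorePenroseInverse.unique {A B C : Matrix (Fin n) (Fin n) ℝ}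
    (hB : IsMoorePenroseInverse A B) (hC : IsMoorePenroseInverse A C) : B = C := by
  obtain ⟨hB₁, hB₂, hB₃, hB₄⟩ := hB
  obtain ⟨hC₁, hC₂, hC₃, hC₄⟩ := hC
  have hAt : Aᵀ = Aᵀ * Cᵀ * Aᵀ := by
    conv_lhs => rw [← hC₁]
    rw [transpose_mul, transpose_mul, mul_assoc]
  have hAB : A * B = A * C :=
    calc A * B = Bᵀ * Aᵀ := by rw [← transpose_mul, hB₃]
    _ = Bᵀ * (Aᵀ * Cᵀ * Aᵀ) := by rw [← hAt]
    _ = (A * B) * (A * C) := by rw [← hC₃, transpose_mul, ← hB₃, transpose_mul]; noncomm_ring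
    _ = A * C := by rw [← Matrix.mul_assoc, hB₁]
  have hBA : B * A = C * A :=
    calc B * A = Aᵀ * Bᵀ := by rw [← transpose_mul, hB₄]
    _ = (Aᵀ * Cᵀ * Aᵀ) * Bᵀ := by rw [← hAt]
    _ = (C * A) * (B * A) := by rw [← hC₄, transpose_mul, ← hB₄, transpose_mul]; noncomm_ring
    _ = C * A := by rw [Matrix.mul_assoc, ← Matrix.mul_assoc A, hB₁]
  calc B = B * A * B := hB₂.symm
  _ = C * A * C := by rw [hBA, mul_assoc, hAB, ← mul_assoc]
  _ = C := hC₂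

theorem pinv_eq_of_isMoorePenroseInverse {A B : Matrix (Fin n) (Fin n) ℝ}
    (h : IsMoorePenroseInverse A B) : pinv A = B := by
  unfold pinv
  split_ifs with hex
  exacts [IsMoorePenroseInverse.unique hex.choose_spec h, (hex ⟨B, h⟩).elim]

theorem conj_diagonal_mul_conj_diagonal {V : Matrix (Fin n) (Fin n) ℝ} (hV : Vᵀ * V = 1)
    (a b : Fin n → ℝ) :
    V * diagonal a * Vᵀ * (V * diagonal b * Vᵀ) = V * diagonal (a * b) * Vᵀ := by
  simp only [Matrix.mul_assoc]
  rw [← Matrix.mul_assoc Vᵀ, hV, Matrix.one_mul, ← Matrix.mul_assoc (diagonal a),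
    diagonal_mul_diagonal]
  rfl

theorem transpose_conj_diagonal (V : Matrix (Fin n) (Fin n) ℝ) (a : Fin n → ℝ) :
    (V * diagonal a * Vᵀ)ᵀ = V * diagonal a * Vᵀ := by
  rw [transpose_mul, transpose_mul, transpose_transpose, diagonal_transpose, Matrix.mul_assoc]

theorem dotProduct_conj_diagonal_mulVec (V : Matrix (Fin n) (Fin n) ℝ) (a x : Fin n → ℝ) :
    x ⬝ᵥ (V * diagonal a * Vᵀ) *ᵥ x = ∑ k, a k * (Vᵀ *ᵥ x) k ^ 2 := by
  rw [← mulVec_mulVec, ← mulVec_mulVec, dotProduct_mulVec, ← mulVec_transpose]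
  simp only [dotProduct, mulVec_diagonal]
  exact Finset.sum_congr rfl fun k _ => by ring

namespace IsHermitian

variable {A : Matrix (Fin n) (Fin n) ℝ} (hA : A.IsHermitian)
include hA

theorem transpose_eigenvectorUnitary_mul_self :
    (hA.eigenvectorUnitary : Matrix (Fin n) (Fin n) ℝ)ᵀ * hA.eigenvectorUnitary = 1 := by
  have h := Unitary.coe_star_mul_self hA.eigenvectorUnitary
  rwa [star_eq_conjTranspose, conjTranspose_eq_transpose_of_trivial] at h

theorem eq_conj_diagonal_eigenvalues :
    A = hA.eigenvectorUnitary * diagonal hA.eigenvalues *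
      (hA.eigenvectorUnitary : Matrix (Fin n) (Fin n) ℝ)ᵀ := by
  conv_lhs => rw [hA.spectral_theorem]
  simp [Unitary.conjStarAlgAut_apply, star_eq_conjTranspose]

theorem pinv_eq :
    pinv A = hA.eigenvectorUnitary * diagonal hA.eigenvalues⁻¹ *
      (hA.eigenvectorUnitary : Matrix (Fin n) (Fin n) ℝ)ᵀ := by
  have hV := hA.transpose_eigenvectorUnitary_mul_self
  apply pinv_eq_of_isMoorePenroseInverse
  conv => enter [1]; rw [hA.eq_conj_diagonal_eigenvalues]
  refine ⟨?_, ?_, ?_, ?_⟩ <;>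
    simp only [conj_diagonal_mul_conj_diagonal hV, transpose_conj_diagonal]
  all_goals congr; ext k
  exacts [mul_inv_mul_cancel _, by simpa using mul_inv_mul_cancel (hA.eigenvalues k)⁻¹]

theorem dotProduct_eigenvectorBasis_self (k : Fin n) :
    ⇑(hA.eigenvectorBasis k) ⬝ᵥ ⇑(hA.eigenvectorBasis k) = 1 := by
  simpa [Matrix.mul_apply, dotProduct] using
    congrFun (congrFun hA.transpose_eigenvectorUnitary_mul_self k) k

theorem dotProduct_eigenvectorBasis_eq_zero {v : Fin n → ℝ} (hv : A *ᵥ v = 0) {k : Fin n}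
    (hk : hA.eigenvalues k ≠ 0) : v ⬝ᵥ ⇑(hA.eigenvectorBasis k) = 0 := by
  have h : v ⬝ᵥ A *ᵥ ⇑(hA.eigenvectorBasis k) = 0 := by
    rw [dotProduct_mulVec, ← mulVec_transpose, ← conjTranspose_eq_transpose_of_trivial, hA.eq, hv,
      zero_dotProduct]
  rw [hA.mulVec_eigenvectorBasis, dotProduct_smul, smul_eq_mul] at h
  exact (mul_eq_zero.mp h).resolve_left hk

theorem sortedEigs_eq :
    sortedEigs A = (Finset.univ.val.map hA.eigenvalues).sort (· ≤ ·) :=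
  dif_pos hA

theorem mem_sortedEigs {x : ℝ} : x ∈ sortedEigs A ↔ ∃ k, hA.eigenvalues k = x := by
  simp only [hA.sortedEigs_eq, Multiset.mem_sort, Multiset.mem_map, Finset.mem_val,
    Finset.mem_univ, true_and]

theorem exists_sortedEigs_eq_cons_cons (hn : 2 ≤ n) :
    ∃ a t, sortedEigs A = a :: secondSmallestEig A :: t := by
  have hlen : (sortedEigs A).length = n := by
    rw [hA.sortedEigs_eq, Multiset.length_sort, Multiset.card_map, Finset.card_val,
      Finset.card_univ, Fintype.card_fin]
  unfold secondSmallestEig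
  match sortedEigs A, hlen with
  | a :: b :: t, _ => exact ⟨a, t, rfl⟩
  | [], h | [_], h => simp only [List.length_nil, List.length_singleton] at h; omega

theorem exists_eigenvalues_eq_secondSmallestEig (hn : 2 ≤ n) :
    ∃ k, hA.eigenvalues k = secondSmallestEig A := by
  obtain ⟨a, t, hl⟩ := hA.exists_sortedEigs_eq_cons_cons hn
  exact hA.mem_sortedEigs.mp (by simp [hl])

theorem count_zero_sortedEigs_add_rank : (sortedEigs A).count 0 + A.rank = n := by
  rw [hA.sortedEigs_eq, ← Multiset.coe_count, Multiset.sort_eq, Multiset.count_map,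
    hA.rank_eq_card_non_zero_eigs, Fintype.card_subtype, ← Finset.filter_val, ← Finset.card_def]
  simpa [eq_comm] using Finset.card_filter_add_card_filter_not (s := Finset.univ)
    (fun k => 0 = hA.eigenvalues k)

end IsHermitian

theorem PosSemidef.inv_eigenvalues_mul_sq_le {A : Matrix (Fin n) (Fin n) ℝ} (hA : A.PosSemidef)
    (x : Fin n → ℝ) (k : Fin n) :
    (hA.isHermitian.eigenvalues k)⁻¹ * (⇑(hA.isHermitian.eigenvectorBasis k) ⬝ᵥ x) ^ 2 ≤
      x ⬝ᵥ pinv A *ᵥ x := by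
  rw [hA.isHermitian.pinv_eq, dotProduct_conj_diagonal_mulVec]
  refine le_of_eq_of_le ?_ (Finset.single_le_sum (fun j _ => mul_nonneg
    (inv_nonneg.mpr (hA.eigenvalues_nonneg j)) (sq_nonneg _)) (Finset.mem_univ k))
  rfl

/-- `rank A ≥ n - 1` leaves at most one zero eigenvalue, so the sorted spectrum cannot start with
`0, 0`. -/
theorem PosSemidef.secondSmallestEig_pos {A : Matrix (Fin n) (Fin n) ℝ} (hA : A.PosSemidef)
    (hn : 2 ≤ n) (hrank : n - 1 ≤ A.rank) : 0 < secondSmallestEig A := by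
  obtain ⟨a, t, hl⟩ := hA.isHermitian.exists_sortedEigs_eq_cons_cons hn
  have hsorted := hA.isHermitian.sortedEigs_eq ▸ Multiset.pairwise_sort _ (· ≤ ·)
  rw [hl, List.pairwise_cons] at hsorted
  have ha : 0 ≤ a := by
    obtain ⟨k, hk⟩ := hA.isHermitian.mem_sortedEigs.mp (hl ▸ List.mem_cons_self)
    exact hk ▸ hA.eigenvalues_nonneg k
  have hcount := hA.isHermitian.count_zero_sortedEigs_add_rank
  by_contra! hb
  obtain rfl : a = 0 := by linarith [hsorted.1 _ List.mem_cons_self]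
  rw [hl, le_antisymm hb (hsorted.1 _ List.mem_cons_self)] at hcount
  simp at hcount
  omega

theorem PosSemidef.exists_fiedler_vector {A : Matrix (Fin n) (Fin n) ℝ} (hA : A.PosSemidef)
    (hn : 2 ≤ n) (hA1 : A *ᵥ 1 = 0) (hrank : n - 1 ≤ A.rank) :
    ∃ ψ : Fin n → ℝ, ∑ i, ψ i = 0 ∧ ∑ i, ψ i ^ 2 = 1 ∧ ∀ i j,
      (ψ i - ψ j) ^ 2 / secondSmallestEig A ≤
        (Pi.single i 1 - Pi.single j 1) ⬝ᵥ pinv A *ᵥ (Pi.single i 1 - Pi.single j 1) := by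
  obtain ⟨k, hk⟩ := hA.isHermitian.exists_eigenvalues_eq_secondSmallestEig hn
  refine ⟨hA.isHermitian.eigenvectorBasis k, ?_, ?_, fun i j => ?_⟩
  · simpa [dotProduct] using hA.isHermitian.dotProduct_eigenvectorBasis_eq_zero hA1
      (hk ▸ (hA.secondSmallestEig_pos hn hrank).ne')
  · simpa [dotProduct, sq] using hA.isHermitian.dotProduct_eigenvectorBasis_self k
  · have h := hA.inv_eigenvalues_mul_sq_le (Pi.single i 1 - Pi.single j 1) k
    rwa [hk, dotProduct_sub, dotProduct_single_one, dotProduct_single_one, inv_mul_eq_div] at h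

section PosSemidef

variable {ι : Type*} [Fintype ι]

theorem PosSemidef.mulVec_eq_zero_of_add_mulVec_eq_zero {A B : Matrix ι ι ℝ} (hA : A.PosSemidef)
    (hB : B.PosSemidef) {x : ι → ℝ} (h : (A + B) *ᵥ x = 0) : A *ᵥ x = 0 := by
  rw [← hA.dotProduct_mulVec_zero_iff]
  have h0 : star x ⬝ᵥ A *ᵥ x + star x ⬝ᵥ B *ᵥ x = 0 := by
    rw [← dotProduct_add, ← add_mulVec, h, dotProduct_zero]
  exact ((add_eq_zero_iff_of_nonneg (hA.dotProduct_mulVec_nonneg x)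
    (hB.dotProduct_mulVec_nonneg x)).mp h0).1

theorem PosSemidef.rank_le_rank_add {A B : Matrix ι ι ℝ} (hA : A.PosSemidef)
    (hB : B.PosSemidef) : A.rank ≤ (A + B).rank := by
  have hker : LinearMap.ker (A + B).mulVecLin ≤ LinearMap.ker A.mulVecLin :=
    fun _ hx => hA.mulVec_eq_zero_of_add_mulVec_eq_zero hB hx
  have hA' := LinearMap.finrank_range_add_finrank_ker A.mulVecLin
  have hAB' := LinearMap.finrank_range_add_finrank_ker (A + B).mulVecLin
  have := Submodule.finrank_mono hker
  unfold rank
  omega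

end PosSemidef

end Matrix

section WeightedLaplacian

variable {ι : Type*} [Fintype ι] [DecidableEq ι]

def weightedLaplacian (w : ι → ι → ℝ) : Matrix ι ι ℝ :=
  of fun i j => if i = j then ∑ k, w i k else -w i j

variable {w : ι → ι → ℝ}

theorem weightedLaplacian_mulVec_apply (hdiag : ∀ i, w i i = 0) (x : ι → ℝ) (i : ι) :
    (weightedLaplacian w *ᵥ x) i = ∑ j, w i j * (x i - x j) := by
  have hentry : ∀ j, (if i = j then ∑ k, w i k else -w i j) =
      (if i = j then ∑ k, w i k else 0) - w i j := by
    intro j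
    split_ifs with h <;> simp [h, hdiag]
  simp only [weightedLaplacian, mulVec, dotProduct, of_apply, hentry, sub_mul, ite_mul, zero_mul,
    Finset.sum_sub_distrib, Finset.sum_ite_eq, Finset.mem_univ, if_true, mul_sub, Finset.sum_mul]

theorem weightedLaplacian_mulVec_one (hdiag : ∀ i, w i i = 0) : weightedLaplacian w *ᵥ 1 = 0 := by
  ext i
  simp [weightedLaplacian_mulVec_apply hdiag]

theorem dotProduct_weightedLaplacian_mulVec (hsymm : ∀ i j, w i j = w j i)
    (hdiag : ∀ i, w i i = 0) (x : ι → ℝ) :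
    x ⬝ᵥ weightedLaplacian w *ᵥ x = (∑ i, ∑ j, w i j * (x i - x j) ^ 2) / 2 := by
  have hswap : ∑ i, ∑ j, w i j * (x i - x j) * x i = ∑ i, ∑ j, w i j * (x j - x i) * x j := by
    rw [Finset.sum_comm]
    exact Finset.sum_congr rfl fun i _ => Finset.sum_congr rfl fun j _ => by rw [hsymm]
  have hquad : x ⬝ᵥ weightedLaplacian w *ᵥ x = ∑ i, ∑ j, w i j * (x i - x j) * x i := by
    simp only [dotProduct, weightedLaplacian_mulVec_apply hdiag, Finset.mul_sum]
    exact Finset.sum_congr rfl fun i _ => Finset.sum_congr rfl fun j _ => by ring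
  rw [hquad, eq_div_iff two_ne_zero, mul_two]
  nth_rewrite 2 [hswap]
  simp only [← Finset.sum_add_distrib]
  exact Finset.sum_congr rfl fun i _ => Finset.sum_congr rfl fun j _ => by ring

theorem isHermitian_weightedLaplacian (hsymm : ∀ i j, w i j = w j i) :
    (weightedLaplacian w).IsHermitian := by
  ext i j
  obtain rfl | h := eq_or_ne i j
  · rfl
  · simp [weightedLaplacian, h, h.symm, hsymm j i]

theorem posSemidef_weightedLaplacian (hsymm : ∀ i j, w i j = w j i) (hdiag : ∀ i, w i i = 0)
    (hnn : ∀ i j, 0 ≤ w i j) : (weightedLaplacian w).PosSemidef := by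
  refine .of_dotProduct_mulVec_nonneg (isHermitian_weightedLaplacian hsymm) fun x => ?_
  rw [star_trivial, dotProduct_weightedLaplacian_mulVec hsymm hdiag]
  exact div_nonneg (Finset.sum_nonneg fun i _ => Finset.sum_nonneg fun j _ =>
    mul_nonneg (hnn i j) (sq_nonneg _)) two_pos.le

end WeightedLaplacian

theorem sum_sum_sub_sq {ι : Type*} [Fintype ι] (x : ι → ℝ) :
    ∑ i, ∑ j, (x i - x j) ^ 2 = 2 * Fintype.card ι * ∑ i, x i ^ 2 - 2 * (∑ i, x i) ^ 2 := by
  simp only [sub_sq, Finset.sum_add_distrib, Finset.sum_sub_distrib, Finset.sum_const,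
    ← Finset.mul_sum, ← Finset.sum_mul, Finset.card_univ, nsmul_eq_mul]
  ring

namespace SignedGraph

variable {n : ℕ} (Γ : SignedGraph n)

theorem Lplus_eq_weightedLaplacian : Γ.Lplus = weightedLaplacian Γ.wplus := rfl

theorem Lminus_eq_weightedLaplacian : Γ.Lminus = weightedLaplacian Γ.wminus := rfl

theorem posSemidef_Lminus : Γ.Lminus.PosSemidef :=
  posSemidef_weightedLaplacian Γ.wminus_symm Γ.wminus_diag Γ.wminus_nonneg

theorem Leps_mulVec_one (ε : ℝ) : Γ.Leps ε *ᵥ 1 = 0 := by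
  rw [Leps, sub_mulVec, smul_mulVec, Lplus_eq_weightedLaplacian, Lminus_eq_weightedLaplacian,
    weightedLaplacian_mulVec_one Γ.wplus_diag, weightedLaplacian_mulVec_one Γ.wminus_diag,
    smul_zero, sub_zero]

theorem Leps_eq_Leps_add_smul_Lminus (ε ε' : ℝ) :
    Γ.Leps ε = Γ.Leps ε' + (ε' - ε) • Γ.Lminus := by
  simp only [Leps, sub_smul]
  abel

theorem exists_gt_of_lt_consensusIndex {ε : ℝ} (hε0 : 0 < ε) (hε : ε < Γ.consensusIndex) :
    ∃ ε', ε < ε' ∧ (Γ.Leps ε').PosSemidef ∧ (Γ.Leps ε').rank = n - 1 := by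
  have hne : {δ : ℝ | 0 < δ ∧ (Γ.Leps δ).PosSemidef ∧ (Γ.Leps δ).rank = n - 1}.Nonempty := by
    by_contra h
    rw [Set.not_nonempty_iff_eq_empty] at h
    rw [consensusIndex, h, Real.sSup_empty] at hε
    exact hε0.not_gt hε
  obtain ⟨ε', ⟨-, hpsd, hrank⟩, hlt⟩ := exists_lt_of_lt_csSup hne hε
  exact ⟨ε', hlt, hpsd, hrank⟩

theorem posSemidef_Leps_of_lt_consensusIndex {ε : ℝ} (hε0 : 0 < ε)
    (hε : ε < Γ.consensusIndex) : (Γ.Leps ε).PosSemidef := by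
  obtain ⟨ε', hlt, hpsd, -⟩ := Γ.exists_gt_of_lt_consensusIndex hε0 hε
  rw [Γ.Leps_eq_Leps_add_smul_Lminus ε ε']
  exact hpsd.add (Γ.posSemidef_Lminus.smul (sub_pos.mpr hlt).le)

theorem sub_one_le_rank_Leps_of_lt_consensusIndex {ε : ℝ} (hε0 : 0 < ε)
    (hε : ε < Γ.consensusIndex) : n - 1 ≤ (Γ.Leps ε).rank := by
  obtain ⟨ε', hlt, hpsd, hrank⟩ := Γ.exists_gt_of_lt_consensusIndex hε0 hε
  rw [Γ.Leps_eq_Leps_add_smul_Lminus ε ε', ← hrank]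
  exact hpsd.rank_le_rank_add (Γ.posSemidef_Lminus.smul (sub_pos.mpr hlt).le)

/-- On at most one vertex `Ω_ε = 0`, and the junk value `0⁻¹ = 0` makes `τ_ε = 0`. -/
theorem tau_eq_zero_of_le_one (hn : n ≤ 1) (ε : ℝ) : Γ.tau ε = 0 := by
  have hΩ : Γ.costMatrix ε = 0 := by
    ext i j
    obtain rfl : i = j := Fin.ext (by omega)
    simp [costMatrix, cost]
  rw [tau, hΩ, Matrix.inv_zero, zero_mulVec]

theorem sum_cost_mul_tau {ε : ℝ} (hτ : Γ.tau ε ≠ 0) (i : Fin n) :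
    ∑ j, Γ.cost ε i j * Γ.tau ε j = n := by
  have hdet : IsUnit (Γ.costMatrix ε).det := by
    by_contra h
    exact hτ (by rw [tau, nonsing_inv_apply_not_isUnit _ h, zero_mulVec])
  have hΩτ : Γ.costMatrix ε *ᵥ Γ.tau ε = fun _ => (n : ℝ) := by
    rw [tau, mulVec_mulVec, mul_nonsing_inv _ hdet, one_mulVec]
  simpa [mulVec, dotProduct, costMatrix] using congrFun hΩτ i

end SignedGraph

theorem stmt3_general {n : ℕ} (Γ : SignedGraph n)
    (ε : ℝ) (hε0 : 0 < ε) (hε : ε < Γ.consensusIndex)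
    (K : ℝ) (hK : 0 < K) (hcurv : ∀ i : Fin n, K ≤ Γ.tau ε i) :
    2 * K / (n : ℝ) ≤ secondSmallestEig (Γ.Leps ε) := by
  rcases Nat.eq_zero_or_pos n with rfl | hn0
  · simp [secondSmallestEig, sortedEigs]
  have hτ : Γ.tau ε ≠ 0 := fun h => hK.not_ge (by simpa [h] using hcurv ⟨0, hn0⟩)
  have hn : 2 ≤ n := by
    by_contra! hn
    exact hτ (Γ.tau_eq_zero_of_le_one (by omega) ε)
  have hpsd := Γ.posSemidef_Leps_of_lt_consensusIndex hε0 hε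
  have hrank := Γ.sub_one_le_rank_Leps_of_lt_consensusIndex hε0 hε
  have hlam := hpsd.secondSmallestEig_pos hn hrank
  obtain ⟨ψ, hψ_sum, hψ_norm, hψ⟩ := hpsd.exists_fiedler_vector hn (Γ.Leps_mulVec_one ε) hrank
  set lam₂ := secondSmallestEig (Γ.Leps ε)
  have key : 2 * n * K / lam₂ ≤ n * n := calc
    2 * n * K / lam₂ = ∑ i, ∑ j, (ψ i - ψ j) ^ 2 / lam₂ * K := by
      simp only [← Finset.sum_mul, ← Finset.sum_div, sum_sum_sub_sq, hψ_sum, hψ_norm,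
        Fintype.card_fin]
      ring
    _ ≤ ∑ i, ∑ j, Γ.cost ε i j * Γ.tau ε j :=
      Finset.sum_le_sum fun i _ => Finset.sum_le_sum fun j _ => mul_le_mul (hψ i j) (hcurv j)
        hK.le ((div_nonneg (sq_nonneg _) hlam.le).trans (hψ i j))
    _ = n * n := by simp [Γ.sum_cost_mul_tau hτ]
  have hn' : (0 : ℝ) < n := by positivity
  rw [div_le_iff₀ hlam] at key
  rw [div_le_iff₀ hn']
  nlinarith

/-- Lichnerowicz-type inequality for the node ε-repelling
curvature. -/
theorem stmt3 {n : ℕ} (Γ : SignedGraph n) (hpc : Γ.PosConnected)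
    (ε : ℝ) (hε0 : 0 < ε) (hε : ε < Γ.consensusIndex)
    (K : ℝ) (hK : 0 < K) (hcurv : ∀ i : Fin n, K ≤ Γ.tau ε i) :
    2 * K / (n : ℝ) ≤ secondSmallestEig (Γ.Leps ε) :=
  stmt3_general Γ ε hε0 hε K hK hcurv
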